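/- Let R = F_2[Y]/(Y^3 − 1) and let ℓ ≥ 1. Then every Hermitian self-dual linear code C ⊆ R^{2ℓ+2} over R is obtained, up to a permutation of the 2ℓ+2 coordinates, by the building-up construction: there exist a permutation σ of the coordinates, a Hermitian self-dual linear code C_0 ⊆ R^{2ℓ} generated as an R-module by vectors r_1, …, r_k, an element c ∈ R with c·conj(c) = −1 (= 1), and a vector x ∈ R^{2ℓ} with ⟨x,x⟩ = −1 (= 1), such that the code obtained from C by applying σ to coordinates equals the R-submodule of R^{2ℓ+2} generated by (1, 0, x) and the vectors (y_i, c·y_i, r_i) for 1 ≤ i ≤ k, where y_i = −⟨r_i, x⟩. -/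

import Mathlib

/-!
Write `R ≅ 𝔽₂ × 𝔽₄` through the orthogonal idempotents `e₁ = 1 + Y + Y²` and `e₂ = Y + Y²`. For
each of them, "the `e`-part of coordinate `i` vanishes on every codeword of `C` on which that of
coordinate `j` does" is an equivalence relation on coordinates, and self-duality forces at least two
classes once the length is `≥ 3`. Two such relations cannot cover all pairs, so some pair `(i, j)`
is unrelated for both; gluing the two witnesses gives a codeword with a unit at `i` and `0` at `j`.
Moving `i, j` to the front and normalising yields `(1, 0, x) ∈ C`, so `⟨x, x⟩ = -1`. Then
`C = R (1, 0, x) + L(C₀)`, where `L w = (-⟨w, x⟩, -c ⟨w, x⟩, w)` preserves the Hermitian form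
(as `c c̄ = -1`) and `C₀ = L⁻¹(C)` is self-dual.
-/


open Polynomial

noncomputable section

/-- The ring `R = F_q[Y]/(Y^m − 1)`. -/
abbrev Rq (F : Type) [Field F] (m : ℕ) := AdjoinRoot ((X : F[X]) ^ m - 1)

lemma root_pow_eq_one (F : Type) [Field F] (m : ℕ) :
    (AdjoinRoot.root ((X : F[X]) ^ m - 1)) ^ m = 1 := by
  have h : (aeval (AdjoinRoot.root ((X : F[X]) ^ m - 1)) ((X : F[X]) ^ m - 1)) = 0 := by
    rw [AdjoinRoot.aeval_eq, AdjoinRoot.mk_self]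
  simp only [map_sub, map_pow, aeval_X, map_one, sub_eq_zero] at h
  exact h

/-- Conjugation on `R`: the `F`-algebra map determined by `Y ↦ Y^{m−1} (= Y⁻¹)`. -/
noncomputable def conjR (F : Type) [Field F] (m : ℕ) : Rq F m →ₐ[F] Rq F m :=
  AdjoinRoot.liftAlgHom _ (Algebra.ofId F (Rq F m)) ((AdjoinRoot.root ((X : F[X]) ^ m - 1)) ^ (m - 1)) (by
    show aeval _ _ = 0
    simp only [map_sub, map_pow, aeval_X, map_one, sub_eq_zero, ← pow_mul]
    rw [mul_comm, pow_mul, root_pow_eq_one, one_pow])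

/-- The Hermitian inner product `⟨x,y⟩ = Σ_j x_j ⬝ conj(y_j)` on `R^n`. -/
def herm (F : Type) [Field F] (m : ℕ) {n : ℕ} (x y : Fin n → Rq F m) : Rq F m :=
  ∑ j, x j * conjR F m (y j)

/-- A linear code `C ⊆ R^n` is Hermitian self-dual if `C = C^⊥`, i.e. membership in `C`
coincides with orthogonality to all of `C`. -/
def IsHermSelfDual (F : Type) [Field F] (m : ℕ) {n : ℕ}
    (C : Submodule (Rq F m) (Fin n → Rq F m)) : Prop :=
  ∀ y, y ∈ C ↔ ∀ x ∈ C, herm F m x y = 0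

theorem exists_not_and_not_of_equivalence {α : Type*} {r s : α → α → Prop} (hr : Equivalence r)
    (hs : Equivalence s) (hr' : ∃ a b, ¬ r a b) (hs' : ∃ a b, ¬ s a b) :
    ∃ a b, ¬ r a b ∧ ¬ s a b := by
  by_contra! h
  obtain ⟨a, b, hab⟩ := hr'
  obtain ⟨c, d, hcd⟩ := hs'
  have hrcd : r c d := not_not.1 fun h' => hcd (h c d h')
  -- `p` is `s`-unrelated to `c` or to `d`, so `r`-related to one of them, hence to `c`
  have hr_c : ∀ p, r p c := by
    intro p
    by_contra hpc
    have hpd : s p d := h p d fun hpd => hpc (hr.trans hpd (hr.symm hrcd))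
    exact hcd (hs.trans (hs.symm (h p c hpc)) hpd)
  exact hab (hr.trans (hr_c a) (hr.symm (hr_c b)))

lemma Equiv.Perm.exists_apply_eq_and_apply_eq {α : Type*} [DecidableEq α] {a b c d : α}
    (hab : a ≠ b) (hcd : c ≠ d) : ∃ σ : Equiv.Perm α, σ a = c ∧ σ b = d := by
  set b' := Equiv.swap a c b
  have hb' : c ≠ b' := fun h => hab (by simpa [b'] using congrArg (Equiv.swap a c) h)
  exact ⟨(Equiv.swap a c).trans (Equiv.swap b' d), by simp [Equiv.swap_apply_of_ne_of_ne hb' hcd],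
    by simp [b']⟩

section Hermitian

variable {F : Type} [Field F] {q n : ℕ}

lemma conjR_root :
    conjR F q (AdjoinRoot.root _) = AdjoinRoot.root ((X : F[X]) ^ q - 1) ^ (q - 1) :=
  AdjoinRoot.liftAlgHom_root _ _ _ _

lemma conjR_conjR (hq : 0 < q) (a : Rq F q) : conjR F q (conjR F q a) = a := by
  suffices h : (conjR F q).comp (conjR F q) = AlgHom.id F (Rq F q) from DFunLike.congr_fun h a
  apply AdjoinRoot.algHom_ext
  obtain ⟨p, rfl⟩ : ∃ p, q = p + 1 := ⟨q - 1, by omega⟩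
  have hζ := root_pow_eq_one F (p + 1)
  rw [AlgHom.comp_apply, conjR_root, map_pow, conjR_root, ← pow_mul, Nat.add_sub_cancel,
    AlgHom.id_apply]
  calc _ = AdjoinRoot.root _ ^ (p * p) * AdjoinRoot.root _ ^ (p + 1) := by rw [hζ, mul_one]
    _ = AdjoinRoot.root _ ^ ((p + 1) * p) * AdjoinRoot.root _ := by ring
    _ = AdjoinRoot.root ((X : F[X]) ^ (p + 1) - 1) := by rw [pow_mul, hζ, one_pow, one_mul]

lemma conjR_injective (hq : 0 < q) : Function.Injective (conjR F q) :=
  Function.LeftInverse.injective (conjR_conjR hq)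

lemma herm_add_left (u v w : Fin n → Rq F q) :
    herm F q (u + v) w = herm F q u w + herm F q v w := by
  simp only [herm, Pi.add_apply, add_mul, Finset.sum_add_distrib]

lemma herm_sub_left (u v w : Fin n → Rq F q) :
    herm F q (u - v) w = herm F q u w - herm F q v w := by
  simp only [herm, Pi.sub_apply, sub_mul, Finset.sum_sub_distrib]

lemma herm_smul_left (a : Rq F q) (u w : Fin n → Rq F q) :
    herm F q (a • u) w = a * herm F q u w := by
  simp only [herm, Pi.smul_apply, smul_eq_mul, mul_assoc, Finset.mul_sum]

lemma herm_sub_right (u v w : Fin n → Rq F q) :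
    herm F q u (v - w) = herm F q u v - herm F q u w := by
  simp only [herm, Pi.sub_apply, map_sub, mul_sub, Finset.sum_sub_distrib]

lemma herm_single_right (u : Fin n → Rq F q) (i : Fin n) (a : Rq F q) :
    herm F q u (Pi.single i a) = u i * conjR F q a := by
  simp [herm, Pi.single_apply, apply_ite (conjR F q)]

lemma conjR_herm (hq : 0 < q) (u v : Fin n → Rq F q) :
    conjR F q (herm F q u v) = herm F q v u := by
  simp only [herm, map_sum, map_mul, conjR_conjR hq, mul_comm]

lemma herm_append {k : ℕ} (u v : Fin k → Rq F q) (x z : Fin n → Rq F q) :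
    herm F q (Fin.append u x) (Fin.append v z) = herm F q u v + herm F q x z := by
  simp only [herm, Fin.sum_univ_add, Fin.append_left, Fin.append_right]

lemma herm_vecCons_two (a b a' b' : Rq F q) :
    herm F q ![a, b] ![a', b'] = a * conjR F q a' + b * conjR F q b' := by
  simp [herm, Fin.sum_univ_two]

lemma herm_comp_perm (σ : Equiv.Perm (Fin n)) (u v : Fin n → Rq F q) :
    herm F q (u ∘ σ) (v ∘ σ) = herm F q u v :=
  Equiv.sum_comp σ fun j => u j * conjR F q (v j)

lemma Fin.exists_eq_append_vecCons_two {α : Type*} (v : Fin (2 + n) → α) :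
    ∃ a b w, v = Fin.append ![a, b] w := by
  refine ⟨v (Fin.castAdd n 0), v (Fin.castAdd n 1), fun k => v (Fin.natAdd 2 k), ?_⟩
  conv_lhs => rw [← Fin.append_castAdd_natAdd (f := v)]
  congr 1
  funext k
  fin_cases k <;> rfl

end Hermitian

section SelfDual

variable {F : Type} [Field F] {q n : ℕ} {C : Submodule (Rq F q) (Fin n → Rq F q)}

lemma IsHermSelfDual.herm_eq_zero (hC : IsHermSelfDual F q C) {u v : Fin n → Rq F q}
    (hu : u ∈ C) (hv : v ∈ C) : herm F q u v = 0 :=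
  (hC v).1 hv u hu

lemma IsHermSelfDual.map_funLeft (hC : IsHermSelfDual F q C) (σ : Equiv.Perm (Fin n)) :
    IsHermSelfDual F q (C.map (LinearMap.funLeft (Rq F q) (Rq F q) σ)) := by
  have hmem : ∀ v, v ∈ C.map (LinearMap.funLeft (Rq F q) (Rq F q) σ) ↔ v ∘ σ.symm ∈ C :=
    fun v => C.mem_map_equiv (e := LinearEquiv.funCongrLeft (Rq F q) (Rq F q) σ) (x := v)
  intro v
  rw [hmem, hC]
  constructor
  · intro h u hu
    rw [← herm_comp_perm σ.symm]
    exact h _ ((hmem u).1 hu)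
  · intro h u hu
    have := h (u ∘ σ) ((hmem _).2 (by simpa [Function.comp_assoc]))
    rwa [← herm_comp_perm σ.symm, Function.comp_assoc, σ.self_comp_symm, Function.comp_id] at this

end SelfDual

section BuildingUp

variable {F : Type} [Field F] {q n : ℕ}

def buildUpMap (x : Fin n → Rq F q) (c : Rq F q) :
    (Fin n → Rq F q) →ₗ[Rq F q] (Fin (2 + n) → Rq F q) where
  toFun w := Fin.append ![-herm F q w x, c * -herm F q w x] w
  map_add' u w := by
    funext k
    refine Fin.addCases (fun k => ?_) (fun k => ?_) k
    · fin_cases k <;>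
      simp only [Fin.isValue, Fin.zero_eta, Fin.mk_one, Fin.append_left, Matrix.cons_val_zero,
        Matrix.cons_val_one, Matrix.cons_val_fin_one, Pi.add_apply, herm_add_left] <;> ring
    · simp
  map_smul' a w := by
    funext k
    refine Fin.addCases (fun k => ?_) (fun k => ?_) k
    · fin_cases k <;>
      simp only [Fin.isValue, Fin.zero_eta, Fin.mk_one, Fin.append_left, Matrix.cons_val_zero,
        Matrix.cons_val_one, Matrix.cons_val_fin_one, Pi.smul_apply, smul_eq_mul, RingHom.id_apply,
        herm_smul_left] <;> ring
    · simp

variable {x : Fin n → Rq F q} {c : Rq F q}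

lemma buildUpMap_apply (w : Fin n → Rq F q) :
    buildUpMap x c w = Fin.append ![-herm F q w x, c * -herm F q w x] w := rfl

lemma herm_buildUpMap (hc : c * conjR F q c = -1) (u w : Fin n → Rq F q) :
    herm F q (buildUpMap x c u) (buildUpMap x c w) = herm F q u w := by
  rw [buildUpMap_apply, buildUpMap_apply, herm_append, herm_vecCons_two]
  simp only [map_mul, map_neg]
  linear_combination (herm F q u x * conjR F q (herm F q w x)) * hc

lemma herm_append_buildUpMap (hq : 0 < q) (w : Fin n → Rq F q) :
    herm F q (Fin.append ![1, 0] x) (buildUpMap x c w) = 0 := by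
  rw [buildUpMap_apply, herm_append, herm_vecCons_two, map_neg, conjR_herm hq]
  ring

lemma append_eq_smul_add_buildUpMap (hx : herm F q x x = -1) (hc : c * conjR F q c = -1)
    {a b : Rq F q} {w : Fin n → Rq F q} (h : a + herm F q w x = 0) :
    Fin.append ![a, b] w = (a + conjR F q c * b) • Fin.append ![1, 0] x
      + buildUpMap x c (w - (a + conjR F q c * b) • x) := by
  funext k
  refine Fin.addCases (fun k => ?_) (fun k => ?_) k
  · fin_cases k <;>
      simp only [Fin.isValue, Fin.zero_eta, Fin.mk_one, Fin.append_left, Matrix.cons_val_zero,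
        Matrix.cons_val_one, Matrix.cons_val_fin_one, buildUpMap_apply, Pi.add_apply, Pi.smul_apply,
        smul_eq_mul, herm_sub_left, herm_smul_left, hx]
    · linear_combination h
    · linear_combination c * h + b * hc
  · simp [buildUpMap_apply]

variable {C : Submodule (Rq F q) (Fin (2 + n) → Rq F q)}

lemma IsHermSelfDual.herm_self_eq_neg_one (hC : IsHermSelfDual F q C)
    (he : Fin.append ![1, 0] x ∈ C) : herm F q x x = -1 := by
  have h := hC.herm_eq_zero he he
  rw [herm_append, herm_vecCons_two] at h
  simp only [map_one, mul_one, map_zero, mul_zero, add_zero] at h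
  linear_combination h

lemma IsHermSelfDual.exists_eq_smul_add_buildUpMap (hC : IsHermSelfDual F q C)
    (he : Fin.append ![1, 0] x ∈ C) (hc : c * conjR F q c = -1) {v : Fin (2 + n) → Rq F q}
    (hv : v ∈ C) :
    ∃ α : Rq F q, ∃ u ∈ C.comap (buildUpMap x c),
      v = α • Fin.append ![1, 0] x + buildUpMap x c u := by
  obtain ⟨a, b, w, rfl⟩ := Fin.exists_eq_append_vecCons_two v
  have h := hC.herm_eq_zero hv he
  rw [herm_append, herm_vecCons_two] at h
  simp only [map_one, mul_one, map_zero, mul_zero, add_zero] at h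
  have hv' := append_eq_smul_add_buildUpMap (b := b) (hC.herm_self_eq_neg_one he) hc h
  refine ⟨_, _, ?_, hv'⟩
  rw [Submodule.mem_comap, eq_sub_of_add_eq' hv'.symm]
  exact C.sub_mem hv (C.smul_mem _ he)

lemma IsHermSelfDual.comap_buildUpMap (hq : 0 < q) (hC : IsHermSelfDual F q C)
    (he : Fin.append ![1, 0] x ∈ C) (hc : c * conjR F q c = -1) :
    IsHermSelfDual F q (C.comap (buildUpMap x c)) := by
  intro w
  refine ⟨fun hw u hu => herm_buildUpMap hc u w ▸ hC.herm_eq_zero hu hw, fun hw => ?_⟩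
  rw [Submodule.mem_comap, hC]
  intro v hv
  obtain ⟨α, u, hu, rfl⟩ := hC.exists_eq_smul_add_buildUpMap he hc hv
  rw [herm_add_left, herm_smul_left, herm_append_buildUpMap hq, herm_buildUpMap hc, hw u hu,
    mul_zero, add_zero]

theorem IsHermSelfDual.exists_buildUp (hq : 0 < q) (hC : IsHermSelfDual F q C)
    (he : Fin.append ![1, 0] x ∈ C) (hc : c * conjR F q c = -1) :
    ∃ (k : ℕ) (r : Fin k → Fin n → Rq F q),
      IsHermSelfDual F q (Submodule.span (Rq F q) (Set.range r)) ∧ herm F q x x = -1 ∧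
      C = Submodule.span (Rq F q) (({Fin.append ![1, 0] x} : Set (Fin (2 + n) → Rq F q)) ∪
        Set.range fun i => Fin.append ![-herm F q (r i) x, c * -herm F q (r i) x] (r i)) := by
  set L := buildUpMap x c
  obtain ⟨k, r, hr⟩ :=
    Submodule.fg_iff_exists_fin_generating_family.1 (IsNoetherian.noetherian (C.comap L))
  refine ⟨k, r, hr ▸ hC.comap_buildUpMap hq he hc, hC.herm_self_eq_neg_one he, le_antisymm ?_ ?_⟩
  · intro v hv
    obtain ⟨α, u, hu, rfl⟩ := hC.exists_eq_smul_add_buildUpMap he hc hv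
    refine add_mem (Submodule.smul_mem _ _ (Submodule.subset_span (Or.inl rfl))) ?_
    refine Submodule.span_mono Set.subset_union_right ?_
    change L u ∈ Submodule.span _ (Set.range (L ∘ r))
    rw [Set.range_comp, Submodule.span_image, hr]
    exact Submodule.mem_map_of_mem hu
  · rw [Submodule.span_le]
    rintro v (rfl | ⟨i, rfl⟩)
    · exact he
    · exact (hr ▸ Submodule.subset_span (Set.mem_range_self i) : r i ∈ C.comap L)

end BuildingUp

section CoordDep

variable {F : Type} [Field F] {q n : ℕ} {C : Submodule (Rq F q) (Fin n → Rq F q)} {t : Rq F q}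

/-- When `t R` is a field: column `i` of a generator matrix of `t • C` is a multiple of
column `j`. -/
def CoordDep (C : Submodule (Rq F q) (Fin n → Rq F q)) (t : Rq F q) (i j : Fin n) : Prop :=
  ∀ z ∈ C, t * z j = 0 → t * z i = 0

lemma IsHermSelfDual.exists_mem_mul_apply_ne_zero (hC : IsHermSelfDual F q C)
    (ht : IsIdempotentElem t) (hconj : conjR F q t = t) (ht₀ : t ≠ 0) (i : Fin n) :
    ∃ v ∈ C, t * v i ≠ 0 := by
  by_contra! h
  have hsingle : Pi.single i t ∈ C := by
    rw [hC]
    intro u hu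
    rw [herm_single_right, hconj, mul_comm, h u hu]
  exact ht₀ (ht ▸ by simpa using h _ hsingle)

lemma CoordDep.mul_sub_mul_eq_zero (ht : IsIdempotentElem t) {i p : Fin n}
    (h : CoordDep C t i p) {u v : Fin n → Rq F q} (hu : u ∈ C) (hv : v ∈ C) :
    t * (u p * v i - v p * u i) = 0 := by
  set z := (t * u p) • v - (t * v p) • u
  have hz : t * z i = 0 := h z (C.sub_mem (C.smul_mem _ hv) (C.smul_mem _ hu)) <| by
    simp only [z, Pi.sub_apply, Pi.smul_apply, smul_eq_mul]; ring
  simp only [z, Pi.sub_apply, Pi.smul_apply, smul_eq_mul] at hz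
  linear_combination hz - (u p * v i - v p * u i) * ht.eq

lemma CoordDep.symm (hC : IsHermSelfDual F q C) (ht : IsIdempotentElem t)
    (hconj : conjR F q t = t) (ht₀ : t ≠ 0) (hfield : ∀ a, t * a ≠ 0 → ∃ b, t * a * b = t)
    {i j : Fin n} (h : CoordDep C t i j) : CoordDep C t j i := by
  intro z hz hzi
  by_contra hzj
  obtain ⟨u, hu, hui⟩ := hC.exists_mem_mul_apply_ne_zero ht hconj ht₀ i
  obtain ⟨b, hb⟩ := hfield _ hzj
  apply hui
  have h0 : t * z j * u i = 0 := by
    linear_combination u j * hzi - h.mul_sub_mul_eq_zero ht hu hz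
  calc t * u i = t * z j * b * u i := by rw [hb]
    _ = 0 := by rw [mul_right_comm, h0, zero_mul]

lemma IsHermSelfDual.coordDep_equivalence (hC : IsHermSelfDual F q C) (ht : IsIdempotentElem t)
    (hconj : conjR F q t = t) (ht₀ : t ≠ 0) (hfield : ∀ a, t * a ≠ 0 → ∃ b, t * a * b = t) :
    Equivalence (CoordDep C t) :=
  ⟨fun _ _ _ => id, CoordDep.symm hC ht hconj ht₀ hfield, fun h h' z hz hzk => h z hz (h' z hz hzk)⟩

lemma IsHermSelfDual.exists_not_coordDep (hq : 0 < q) (hC : IsHermSelfDual F q C)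
    (ht : IsIdempotentElem t) (hconj : conjR F q t = t) (ht₀ : t ≠ 0) (hn : 2 < n) :
    ∃ i j, ¬ CoordDep C t i j := by
  by_contra! h
  let i₀ : Fin n := ⟨0, by omega⟩
  let i₁ : Fin n := ⟨1, by omega⟩
  let i₂ : Fin n := ⟨2, by omega⟩
  obtain ⟨v, hv, hv₀⟩ := hC.exists_mem_mul_apply_ne_zero ht hconj ht₀ i₀
  have hv₁ : t * v i₁ ≠ 0 := fun h₁ => hv₀ (h i₀ i₁ v hv h₁)
  set g : Fin n → Rq F q :=
    Pi.single i₀ (conjR F q (t * v i₁)) - Pi.single i₁ (conjR F q (t * v i₀))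
  -- `g` is orthogonal to `C` because all `2 × 2` minors of `t • C` vanish
  have hg : g ∈ C := by
    rw [hC]
    intro u hu
    rw [herm_sub_right, herm_single_right, herm_single_right, conjR_conjR hq, conjR_conjR hq]
    linear_combination (h i₁ i₀).mul_sub_mul_eq_zero ht hu hv
  have hg₂ : g i₂ = 0 := by simp [g, i₀, i₁, i₂, Fin.ext_iff]
  have hg₀ : t * g i₀ = 0 := h i₀ i₂ g hg (by rw [hg₂, mul_zero])
  have : conjR F q (t * v i₁) = 0 :=
    calc conjR F q (t * v i₁) = conjR F q (t * (t * v i₁)) := by rw [← mul_assoc, ht.eq]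
      _ = t * g i₀ := by simp [g, i₀, i₁, Fin.ext_iff, hconj]
      _ = 0 := hg₀
  exact hv₁ (conjR_injective hq (by rw [this, map_zero]))

end CoordDep

lemma exists_perm_append_mem_map {F : Type} [Field F] {q n : ℕ}
    {C : Submodule (Rq F q) (Fin (2 + n) → Rq F q)} {i j : Fin (2 + n)} (hij : i ≠ j)
    {z : Fin (2 + n) → Rq F q} (hz : z ∈ C) (hzi : IsUnit (z i)) (hzj : z j = 0) :
    ∃ (σ : Equiv.Perm (Fin (2 + n))) (x : Fin n → Rq F q),
      Fin.append ![1, 0] x ∈ C.map (LinearMap.funLeft (Rq F q) (Rq F q) σ) := by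
  obtain ⟨σ, hσ₀, hσ₁⟩ := Equiv.Perm.exists_apply_eq_and_apply_eq
    (a := Fin.castAdd n (0 : Fin 2)) (b := Fin.castAdd n 1) (by simp [Fin.ext_iff]) hij
  refine ⟨σ, fun k => (hzi.unit⁻¹ • z) (σ (Fin.natAdd 2 k)), hzi.unit⁻¹ • z, C.smul_mem _ hz, ?_⟩
  funext k
  refine Fin.addCases (fun k => ?_) (fun k => by simp [LinearMap.funLeft_apply]) k
  fin_cases k <;> simp [LinearMap.funLeft_apply, hσ₀, hσ₁, hzj, Units.smul_def]

namespace F2C3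

local notation "R" => Rq (ZMod 2) 3

def Y : R := AdjoinRoot.root _

lemma Y_pow_three : Y ^ 3 = 1 := root_pow_eq_one _ _

lemma conjR_Y : conjR (ZMod 2) 3 Y = Y ^ 2 := conjR_root

lemma two_eq_zero : (2 : R) = 0 := by
  rw [← map_ofNat (algebraMap (ZMod 2) R) 2, show (OfNat.ofNat 2 : ZMod 2) = 0 from rfl, map_zero]

lemma exists_eq_smul (a : R) : ∃ c₀ c₁ c₂ : ZMod 2, a = c₀ • 1 + c₁ • Y + c₂ • Y ^ 2 := by
  induction a using AdjoinRoot.induction_on with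
  | ih p =>
    induction p using Polynomial.induction_on with
    | C c => exact ⟨c, 0, 0, by rw [AdjoinRoot.mk_C, Algebra.smul_def, mul_one]; simp⟩
    | add p p' hp hp' =>
      obtain ⟨a₀, a₁, a₂, ha⟩ := hp
      obtain ⟨b₀, b₁, b₂, hb⟩ := hp'
      exact ⟨a₀ + b₀, a₁ + b₁, a₂ + b₂, by rw [map_add, ha, hb]; module⟩
    | monomial k c hp =>
      obtain ⟨a₀, a₁, a₂, ha⟩ := hp
      refine ⟨a₂, a₀, a₁, ?_⟩
      rw [show C c * X ^ (k + 1) = C c * X ^ k * X by ring, map_mul, ha, AdjoinRoot.mk_X]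
      change _ * Y = _
      have hY : Y ^ 2 * Y = 1 := by rw [← pow_succ, Y_pow_three]
      simp only [add_mul, smul_mul_assoc, one_mul, hY, ← pow_two]
      module

def e₁ : R := 1 + Y + Y ^ 2

def e₂ : R := Y + Y ^ 2

lemma e₁_add_e₂ : e₁ + e₂ = 1 := by
  unfold e₁ e₂
  linear_combination (Y + Y ^ 2) * two_eq_zero

lemma e₁_mul_e₂ : e₁ * e₂ = 0 := by
  have := Y_pow_three; have := two_eq_zero
  unfold e₁ e₂; grind

lemma isIdempotentElem_e₁ : IsIdempotentElem e₁ := by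
  have := Y_pow_three; have := two_eq_zero
  unfold IsIdempotentElem e₁; grind

lemma isIdempotentElem_e₂ : IsIdempotentElem e₂ := by
  have := Y_pow_three; have := two_eq_zero
  unfold IsIdempotentElem e₂; grind

lemma conjR_e₁ : conjR (ZMod 2) 3 e₁ = e₁ := by
  have := Y_pow_three
  simp only [e₁, map_add, map_one, map_pow, conjR_Y]; grind

lemma conjR_e₂ : conjR (ZMod 2) 3 e₂ = e₂ := by
  have := Y_pow_three
  simp only [e₂, map_add, map_pow, conjR_Y]; grind

lemma mk_ne_zero {p : (ZMod 2)[X]} (h₀ : 0 < p.natDegree) (h₃ : p.natDegree < 3) :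
    AdjoinRoot.mk ((X : (ZMod 2)[X]) ^ 3 - 1) p ≠ 0 := by
  rw [Ne, AdjoinRoot.mk_eq_zero]
  intro hdvd
  have := natDegree_le_of_dvd hdvd (ne_zero_of_natDegree_gt h₀)
  rw [← C_1, natDegree_X_pow_sub_C] at this
  omega

lemma e₁_ne_zero : e₁ ≠ 0 := by
  have hdeg : (1 + X + X ^ 2 : (ZMod 2)[X]).natDegree = 2 := by compute_degree!
  have := mk_ne_zero (p := 1 + X + X ^ 2) (by omega) (by omega)
  rwa [map_add, map_add, map_one, map_pow, AdjoinRoot.mk_X] at this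

lemma e₂_ne_zero : e₂ ≠ 0 := by
  have hdeg : (X + X ^ 2 : (ZMod 2)[X]).natDegree = 2 := by compute_degree!
  have := mk_ne_zero (p := X + X ^ 2) (by omega) (by omega)
  rwa [map_add, map_pow, AdjoinRoot.mk_X] at this

-- `e₁ R ≅ 𝔽₂` and `e₂ R ≅ 𝔽₄`; in both, nonzero elements satisfy `a ^ 3 = 1`.
lemma exists_mul_mul_eq {e : R} (he : e = e₁ ∨ e = e₂) {a : R} (h : e * a ≠ 0) :
    ∃ b, e * a * b = e := by
  refine ⟨a ^ 2, ?_⟩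
  have := Y_pow_three; have := two_eq_zero
  have h01 : ∀ c : ZMod 2, c = 0 ∨ c = 1 := by decide
  obtain ⟨c₀, c₁, c₂, rfl⟩ := exists_eq_smul a
  unfold e₁ e₂ at he
  rcases he with rfl | rfl <;> rcases h01 c₀ with rfl | rfl <;> rcases h01 c₁ with rfl | rfl <;>
    rcases h01 c₂ with rfl | rfl <;> simp only [zero_smul, one_smul, add_zero, zero_add] at h ⊢ <;>
    grind

lemma isUnit_of_mul_ne_zero {a : R} (h₁ : e₁ * a ≠ 0) (h₂ : e₂ * a ≠ 0) : IsUnit a := by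
  obtain ⟨b₁, hb₁⟩ := exists_mul_mul_eq (.inl rfl) h₁
  obtain ⟨b₂, hb₂⟩ := exists_mul_mul_eq (.inr rfl) h₂
  exact IsUnit.of_mul_eq_one (e₁ * b₁ + e₂ * b₂) (by linear_combination hb₁ + hb₂ + e₁_add_e₂)

theorem _root_.IsHermSelfDual.exists_isUnit_apply_eq_zero {n : ℕ} {C : Submodule R (Fin n → R)}
    (hC : IsHermSelfDual (ZMod 2) 3 C) (hn : 2 < n) :
    ∃ i j, i ≠ j ∧ ∃ z ∈ C, IsUnit (z i) ∧ z j = 0 := by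
  obtain ⟨i, j, h₁, h₂⟩ := exists_not_and_not_of_equivalence
    (hC.coordDep_equivalence isIdempotentElem_e₁ conjR_e₁ e₁_ne_zero
      fun _ => exists_mul_mul_eq (.inl rfl))
    (hC.coordDep_equivalence isIdempotentElem_e₂ conjR_e₂ e₂_ne_zero
      fun _ => exists_mul_mul_eq (.inr rfl))
    (hC.exists_not_coordDep (by norm_num) isIdempotentElem_e₁ conjR_e₁ e₁_ne_zero hn)
    (hC.exists_not_coordDep (by norm_num) isIdempotentElem_e₂ conjR_e₂ e₂_ne_zero hn)
  simp only [CoordDep, not_forall, exists_prop] at h₁ h₂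
  obtain ⟨z₁, hz₁, hz₁j, hz₁i⟩ := h₁
  obtain ⟨z₂, hz₂, hz₂j, hz₂i⟩ := h₂
  have he₁ := isIdempotentElem_e₁.eq
  have he₂ := isIdempotentElem_e₂.eq
  refine ⟨i, j, fun hij => hz₁i (hij ▸ hz₁j), e₁ • z₁ + e₂ • z₂,
    C.add_mem (C.smul_mem _ hz₁) (C.smul_mem _ hz₂), isUnit_of_mul_ne_zero ?_ ?_, ?_⟩
  · simp only [Pi.add_apply, Pi.smul_apply, smul_eq_mul]
    intro h; apply hz₁i
    linear_combination h - z₁ i * he₁ - z₂ i * e₁_mul_e₂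
  · simp only [Pi.add_apply, Pi.smul_apply, smul_eq_mul]
    intro h; apply hz₂i
    linear_combination h - z₂ i * he₂ - z₁ i * e₁_mul_e₂
  · simp [hz₁j, hz₂j]

end F2C3

/-- Every Hermitian self-dual code over `R = F_2[Y]/(Y^3 − 1)` of length `2ℓ+2` is
obtained, up to a permutation of coordinates, by the building-up construction. -/
theorem statement10 (ℓ : ℕ) (hℓ : 1 ≤ ℓ)
    (C : Submodule (Rq (ZMod 2) 3) (Fin (2 + 2 * ℓ) → Rq (ZMod 2) 3))
    (hC : IsHermSelfDual (ZMod 2) 3 C) :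
    ∃ (σ : Equiv.Perm (Fin (2 + 2 * ℓ))) (k : ℕ)
      (r : Fin k → (Fin (2 * ℓ) → Rq (ZMod 2) 3)) (c : Rq (ZMod 2) 3)
      (x : Fin (2 * ℓ) → Rq (ZMod 2) 3),
      IsHermSelfDual (ZMod 2) 3 (Submodule.span (Rq (ZMod 2) 3) (Set.range r)) ∧
      c * conjR (ZMod 2) 3 c = -1 ∧ herm (ZMod 2) 3 x x = -1 ∧
      Submodule.map (LinearMap.funLeft (Rq (ZMod 2) 3) (Rq (ZMod 2) 3) σ) C =
        Submodule.span (Rq (ZMod 2) 3)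
          (({Fin.append ![1, 0] x} : Set (Fin (2 + 2 * ℓ) → Rq (ZMod 2) 3)) ∪
            Set.range fun i =>
              Fin.append ![- herm (ZMod 2) 3 (r i) x,
                c * (- herm (ZMod 2) 3 (r i) x)] (r i)) := by
  obtain ⟨i, j, hij, z, hz, hzi, hzj⟩ := hC.exists_isUnit_apply_eq_zero (by omega)
  obtain ⟨σ, x, hx⟩ := exists_perm_append_mem_map hij hz hzi hzj
  have hc : 1 * conjR (ZMod 2) 3 1 = -1 := by
    rw [map_one, mul_one]; linear_combination F2C3.two_eq_zero
  obtain ⟨k, r, hr, hxx, hσC⟩ := (hC.map_funLeft σ).exists_buildUp (by norm_num) hx hc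
  exact ⟨σ, k, r, 1, x, hr, hc, hxx, hσC⟩
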